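/- Let G be a finite simple connected graph with at least one vertex that is P₄-free, K_{1,3}-free, and B-free, where B = K₁ * (K₁ ⊔ K₂). Then G is a complete multipartite graph K_{t₁,...,t_r} in which every part has size at most 2. -/

import Mathlib

open SimpleGraph

/-- The join of two graphs on disjoint vertex sets: disjoint union plus all cross edges. -/
def gJoin {α β : Type*} (G : SimpleGraph α) (H : SimpleGraph β) : SimpleGraph (α ⊕ β) where
  Adj x y := match x, y with
    | Sum.inl a, Sum.inl b => G.Adj a b
    | Sum.inr a, Sum.inr b => H.Adj a b
    | Sum.inl _, Sum.inr _ => True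
    | Sum.inr _, Sum.inl _ => True
  symm := by constructor; rintro (a|a) (b|b) h <;> first | exact h.symm | trivial
  loopless := by constructor; rintro (a|a) h; exacts [G.irrefl h, H.irrefl h]

/-- A graph is `P₄`-free if it has no induced subgraph isomorphic to the path on 4 vertices. -/
def P4Free {V : Type*} (G : SimpleGraph V) : Prop :=
  IsEmpty (SimpleGraph.pathGraph 4 ↪g G)

/-- `T` is a connected dominating set of `G`. -/
def IsConnDomSet {V : Type*} (G : SimpleGraph V) (T : Set V) : Prop :=
  T.Nonempty ∧ (G.induce T).Connected ∧ ∀ u ∉ T, ∃ t ∈ T, G.Adj u t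

/-- `T` is a minimum connected dominating set of `G`. -/
def IsMinConnDomSet {V : Type*} (G : SimpleGraph V) (T : Set V) : Prop :=
  IsConnDomSet G T ∧ ∀ T' : Set V, IsConnDomSet G T' → T.ncard ≤ T'.ncard

/-- The graph `K₁ ⊔ K₂`: three vertices, exactly one edge (between 0 and 1). -/
def graphK1K2 : SimpleGraph (Fin 3) := SimpleGraph.fromRel (fun a b => a = 0 ∧ b = 1)

/-- The star `K_{1,3}`: vertex 0 adjacent to 1, 2, 3. -/
def graphK13 : SimpleGraph (Fin 4) := SimpleGraph.fromRel (fun a _ => a = 0)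

/-- The graph `B = K₁ * (K₁ ⊔ K₂)`: vertex 0 adjacent to all, plus the edge 2-3. -/
def graphB : SimpleGraph (Fin 4) := SimpleGraph.fromRel (fun a b => a = 0 ∨ (a = 2 ∧ b = 3))

/-! Non-adjacency is transitive: if `x ≁ y`, `y ≁ z` but `x ~ z`, then `x` and `y` have a common
neighbour `w` (a P₄-free connected graph has diameter at most 2), and `w, y, x, z` induce either `B`
(if `w ~ z`) or the path `y - w - x - z`. Hence `G` is complete multipartite with the
non-adjacency classes as parts, and a part with three vertices together with a neighbour of one of
them (adjacent to all three, again by transitivity) would induce `K_{1,3}`. -/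

variable {V : Type*} {G : SimpleGraph V}

lemma nonempty_embedding_of_adj_iff {n : ℕ} {H : SimpleGraph (Fin n)} (f : Fin n → V)
    (hne : ∀ i j, i < j → f i ≠ f j) (hadj : ∀ i j, i < j → (G.Adj (f i) (f j) ↔ H.Adj i j)) :
    Nonempty (H ↪g G) := by
  have hoff {i j : Fin n} (h : i ≠ j) : f i ≠ f j ∧ (G.Adj (f i) (f j) ↔ H.Adj i j) := by
    rcases h.lt_or_gt with h | h
    · exact ⟨hne i j h, hadj i j h⟩
    · exact ⟨(hne j i h).symm, by rw [G.adj_comm, H.adj_comm]; exact hadj j i h⟩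
  refine ⟨⟨⟨f, fun i j hij => ?_⟩, fun {i j} => ?_⟩⟩
  · by_contra h
    exact (hoff h).1 hij
  · rcases eq_or_ne i j with rfl | h
    · simp
    · exact (hoff h).2

lemma nonempty_pathGraph_four_embedding {a b c d : V} (hab : G.Adj a b) (hbc : G.Adj b c)
    (hcd : G.Adj c d) (hac : ¬G.Adj a c) (had : ¬G.Adj a d) (hbd : ¬G.Adj b d) :
    Nonempty (pathGraph 4 ↪g G) := by
  refine nonempty_embedding_of_adj_iff ![a, b, c, d] (fun i j hij => ?_) (fun i j hij => ?_) <;>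
    fin_cases i <;> fin_cases j <;> simp_all [pathGraph_adj, adj_comm] <;> grind [Adj.ne, adj_comm]

lemma nonempty_graphB_embedding {w y x z : V} (hwy : G.Adj w y) (hwx : G.Adj w x)
    (hwz : G.Adj w z) (hxz : G.Adj x z) (hyx : ¬G.Adj y x) (hyz : ¬G.Adj y z) (nyx : y ≠ x)
    (nyz : y ≠ z) : Nonempty (graphB ↪g G) := by
  refine nonempty_embedding_of_adj_iff ![w, y, x, z] (fun i j hij => ?_) (fun i j hij => ?_) <;>
    fin_cases i <;> fin_cases j <;> simp_all [graphB, adj_comm] <;> grind [Adj.ne, adj_comm]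

lemma nonempty_graphK13_embedding {w x y z : V} (hwx : G.Adj w x) (hwy : G.Adj w y)
    (hwz : G.Adj w z) (hxy : ¬G.Adj x y) (hxz : ¬G.Adj x z) (hyz : ¬G.Adj y z) (nxy : x ≠ y)
    (nxz : x ≠ z) (nyz : y ≠ z) : Nonempty (graphK13 ↪g G) := by
  refine nonempty_embedding_of_adj_iff ![w, x, y, z] (fun i j hij => ?_) (fun i j hij => ?_) <;>
    fin_cases i <;> fin_cases j <;> simp_all [graphK13, adj_comm] <;> grind [Adj.ne, adj_comm]

lemma P4Free.adj_or_exists_adj_adj_of_reachable (h4 : P4Free G) {a b : V}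
    (hr : G.Reachable a b) (hab : a ≠ b) : G.Adj a b ∨ ∃ w, G.Adj a w ∧ G.Adj w b := by
  obtain ⟨p⟩ := hr
  induction p with
  | nil => exact absurd rfl hab
  | @cons a c b hac p ih =>
    by_cases hcb : c = b
    · exact .inl (hcb ▸ hac)
    by_cases hab' : G.Adj a b
    · exact .inl hab'
    rcases ih hcb with hcb' | ⟨w, hcw, hwb⟩
    · exact .inr ⟨c, hac, hcb'⟩
    by_cases haw : G.Adj a w
    · exact .inr ⟨w, haw, hwb⟩
    by_cases hcb' : G.Adj c b
    · exact .inr ⟨c, hac, hcb'⟩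
    -- otherwise `a - c - w - b` is an induced path
    · exact (h4.false (nonempty_pathGraph_four_embedding hac hcw hwb haw hab' hcb').some).elim

lemma P4Free.isTrans_not_adj (h4 : P4Free G) (hc : G.Connected)
    (hB : IsEmpty (graphB ↪g G)) : IsTrans V fun x y => ¬G.Adj x y := by
  refine ⟨fun x y z hxy hyz hxz => ?_⟩
  have nyx : y ≠ x := by rintro rfl; exact hyz hxz
  have nyz : y ≠ z := by rintro rfl; exact hxy hxz
  rcases h4.adj_or_exists_adj_adj_of_reachable (hc.preconnected y x) nyx with hyx | ⟨w, hyw, hwx⟩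
  · exact hxy hyx.symm
  by_cases hwz : G.Adj w z
  · exact hB.false (nonempty_graphB_embedding hyw.symm hwx hwz hxz (hxy ·.symm) hyz nyx nyz).some
  · exact h4.false (nonempty_pathGraph_four_embedding hyw hwx hxz (hxy ·.symm) hyz hwz).some

def nonAdjSetoid (htrans : IsTrans V fun x y => ¬G.Adj x y) : Setoid V where
  r x y := ¬G.Adj x y
  iseqv := ⟨fun _ => G.irrefl, fun h h' => h h'.symm, htrans.trans _ _ _⟩

lemma ncard_le_two_of_isIndepSet (hc : G.Connected) (h13 : IsEmpty (graphK13 ↪g G))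
    (htrans : IsTrans V fun x y => ¬G.Adj x y) {s : Set V}
    (hs : G.IsIndepSet s) : s.ncard ≤ 2 := by
  by_contra! hgt
  obtain ⟨a, has, b, hbs, c, hcs, hab, hac, hbc⟩ :=
    (Set.two_lt_ncard (Set.finite_of_ncard_pos (by omega))).mp hgt
  obtain ⟨w, haw⟩ : ∃ w, G.Adj a w :=
    let ⟨p⟩ := hc.preconnected a b
    ⟨_, p.adj_snd (p.not_nil_of_ne hab)⟩
  have hnot_adj_a {v} (hv : v ∈ s) : ¬G.Adj v a := by
    rcases eq_or_ne v a with rfl | hva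
    · exact G.irrefl
    · exact hs hv has hva
  have hw {v} (hv : v ∈ s) : G.Adj w v := by
    by_contra h
    exact htrans.trans _ _ _ h (hnot_adj_a hv) haw.symm
  exact h13.false (nonempty_graphK13_embedding (hw has) (hw hbs) (hw hcs)
    (hs has hbs hab) (hs has hcs hac) (hs hbs hcs hbc) hab hac hbc).some

theorem stmt8_general {V : Type} (G : SimpleGraph V) (hc : G.Connected)
    (h4 : P4Free G) (h13 : IsEmpty (graphK13 ↪g G)) (hB : IsEmpty (graphB ↪g G)) :
    ∃ (ι : Type) (parts : V → ι),
      (∀ x y, G.Adj x y ↔ parts x ≠ parts y) ∧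
      ∀ i, ({x | parts x = i} : Set V).ncard ≤ 2 := by
  have htrans := h4.isTrans_not_adj hc hB
  let s := nonAdjSetoid htrans
  refine ⟨Quotient s, Quotient.mk s, fun x y => ?_, fun i => ?_⟩
  · rw [Ne, Quotient.eq]
    exact not_not.symm
  · exact ncard_le_two_of_isIndepSet hc h13 htrans fun x hx y hy _ =>
      Quotient.exact (hx.trans hy.symm)

/-- A nonempty connected graph that is P₄-free, K_{1,3}-free and B-free is a complete
multipartite graph with all parts of size at most 2. -/
theorem stmt8 {V : Type} [Fintype V] [Nonempty V] (G : SimpleGraph V) (hc : G.Connected)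
    (h4 : P4Free G) (h13 : IsEmpty (graphK13 ↪g G)) (hB : IsEmpty (graphB ↪g G)) :
    ∃ (ι : Type) (parts : V → ι),
      (∀ x y, G.Adj x y ↔ parts x ≠ parts y) ∧
      ∀ i, ({x | parts x = i} : Set V).ncard ≤ 2 :=
  stmt8_general G hc h4 h13 hB
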